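/- arXiv:1504.01354 — 3 statements merged into one kernel-verified Lean document; each statement's English description precedes it below -/
import Mathlib

section
/- Let P(x,y) = f_n(x)y^n + ... + f_0(x) be an irreducible polynomial over F_p of bidegree (m,n), let t divide p−1, and let Q ∈ F_p[x,y]. If P(x,y) divides Q(x,y^t), then P(x,0)^{⌊t/n⌋} divides Q(x,0) in F_p[x]. -/
open MvPolynomial

/-- Evaluation of a bivariate polynomial at `y = 0`, giving a univariate polynomial in `x`. -/
noncomputable def evalY0 {F : Type*} [CommRing F] (P : MvPolynomial (Fin 2) F) : Polynomial F :=
  MvPolynomial.aeval (fun i : Fin 2 => if i = 0 then Polynomial.X else 0) P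

/-- Substitution `y ↦ y^t` in a bivariate polynomial. -/
noncomputable def subYt {F : Type*} [CommRing F] (t : ℕ) (Q : MvPolynomial (Fin 2) F) :
    MvPolynomial (Fin 2) F :=
  MvPolynomial.aeval (fun i : Fin 2 => if i = 0 then X 0 else (X 1) ^ t) Q

/-!
Let `ζ` be a primitive `t`-th root of unity. The substitutions `y ↦ ζ^i y` are automorphisms
fixing both `Q(x, y^t)` and the evaluation at `y = 0`, so every `P(x, ζ^i y)` is an irreducible
divisor of `Q(x, y^t)` whose value at `y = 0` is `P(x, 0)`. Units of `R[x, y]` are constants, so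
when `P(x, 0) ≠ 0` the values at `y = 0` force `P(x, ζ^i y) ~ P(x, ζ^j y)` to be an equality, and
the coefficients of `y^n` then give `ζ^(i n) = ζ^(j n)`. Hence for `i < ⌊t/n⌋` these divisors are
pairwise coprime, and setting `y = 0` in their product gives `P(x, 0)^⌊t/n⌋ ∣ Q(x, 0)`.
-/

section CommSemiring

variable {R : Type*} [CommSemiring R]

theorem MvPolynomial.aeval_aeval {σ τ A : Type*} [CommSemiring A] [Algebra R A] (f : σ → A)
    (g : τ → MvPolynomial σ R) (P : MvPolynomial τ R) :
    aeval f (aeval g P) = aeval (fun i => aeval f (g i)) P :=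
  aeval_bind₁ f g P

theorem MvPolynomial.exists_coeff_ne_zero_degreeOf {σ : Type*} {P : MvPolynomial σ R}
    (hP : P ≠ 0) (i : σ) : ∃ s, coeff s P ≠ 0 ∧ s i = degreeOf i P := by
  obtain ⟨s, hs, h⟩ := Finset.exists_mem_eq_sup _ (support_nonempty.mpr hP) fun s => s i
  exact ⟨s, mem_support_iff.mp hs, by rw [degreeOf_eq_sup, h]⟩

noncomputable def scaleY (g : R) : MvPolynomial (Fin 2) R →ₐ[R] MvPolynomial (Fin 2) R :=
  aeval fun i => if i = 0 then X 0 else C g * X 1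

theorem scaleY_comp_scaleY (g h : R) : (scaleY g).comp (scaleY h) = scaleY (g * h) := by
  refine algHom_ext fun i => ?_
  fin_cases i <;> simp [scaleY, mul_assoc, mul_left_comm]

theorem scaleY_one : scaleY (1 : R) = AlgHom.id R _ := by
  refine algHom_ext fun i => ?_
  fin_cases i <;> simp [scaleY]

noncomputable def scaleYAlgEquiv (g : Rˣ) : MvPolynomial (Fin 2) R ≃ₐ[R] MvPolynomial (Fin 2) R :=
  AlgEquiv.ofAlgHom (scaleY g) (scaleY ↑g⁻¹)
    (by rw [scaleY_comp_scaleY, Units.mul_inv, scaleY_one])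
    (by rw [scaleY_comp_scaleY, Units.inv_mul, scaleY_one])

theorem irreducible_scaleY {g : R} (hg : IsUnit g) {P : MvPolynomial (Fin 2) R}
    (hP : Irreducible P) : Irreducible (scaleY g P) := by
  obtain ⟨u, rfl⟩ := hg
  exact (MulEquiv.irreducible_iff (scaleYAlgEquiv u)).mpr hP

theorem scaleY_monomial (g : R) (s : Fin 2 →₀ ℕ) (a : R) :
    scaleY g (monomial s a) = monomial s (g ^ s 1 * a) := by
  simp only [scaleY, aeval_eq_bind₁, monomial_eq, Finsupp.prod_fintype, Fin.prod_univ_two,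
    pow_zero, implies_true, map_mul, map_pow, algHom_C, algebraMap_eq, bind₁_X_right, Fin.isValue,
    ↓reduceIte, one_ne_zero, mul_pow]
  ring

theorem coeff_scaleY (g : R) (s : Fin 2 →₀ ℕ) (P : MvPolynomial (Fin 2) R) :
    coeff s (scaleY g P) = g ^ s 1 * coeff s P := by
  induction P using MvPolynomial.induction_on' with
  | monomial u a =>
    rw [scaleY_monomial, coeff_monomial, coeff_monomial]
    split_ifs with h
    · rw [h]
    · rw [mul_zero]
  | add p q hp hq => rw [map_add, coeff_add, coeff_add, hp, hq, mul_add]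

end CommSemiring

section CommRing

variable {R : Type*} [CommRing R]

variable (R) in
noncomputable def evalY0AlgHom : MvPolynomial (Fin 2) R →ₐ[R] Polynomial R :=
  aeval fun i : Fin 2 => if i = 0 then Polynomial.X else 0

theorem evalY0AlgHom_apply (P : MvPolynomial (Fin 2) R) : evalY0AlgHom R P = evalY0 P := rfl

theorem evalY0_scaleY (g : R) (P : MvPolynomial (Fin 2) R) : evalY0 (scaleY g P) = evalY0 P := by
  rw [evalY0, scaleY, aeval_aeval]
  congr 2
  funext i
  fin_cases i <;> simp

theorem evalY0_subYt {t : ℕ} (ht : t ≠ 0) (Q : MvPolynomial (Fin 2) R) :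
    evalY0 (subYt t Q) = evalY0 Q := by
  rw [evalY0, subYt, aeval_aeval]
  congr 2
  funext i
  fin_cases i <;> simp [ht]

theorem scaleY_subYt {t : ℕ} {g : R} (hg : g ^ t = 1) (Q : MvPolynomial (Fin 2) R) :
    scaleY g (subYt t Q) = subYt t Q := by
  rw [scaleY, subYt, aeval_aeval]
  congr 2
  funext i
  fin_cases i <;> simp [mul_pow, ← C_pow, hg]

end CommRing

theorem Irreducible.isRelPrime_of_not_associated {M : Type*} [Monoid M] {p q : M}
    (hp : Irreducible p) (hq : Irreducible q) (h : ¬Associated p q) : IsRelPrime p q :=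
  hp.isRelPrime_iff_not_dvd.mpr fun hpq => h (hp.associated_of_dvd hq hpq)

theorem FiniteField.exists_isPrimitiveRoot_of_dvd {K : Type*} [Field K] [Fintype K] {t : ℕ}
    (ht : t ∣ Fintype.card K - 1) : ∃ ζ : K, IsPrimitiveRoot ζ t := by
  classical
  obtain ⟨g, hg⟩ := IsCyclic.exists_ofOrder_eq_natCard (α := Kˣ)
  rw [Nat.card_eq_fintype_card, Fintype.card_units] at hg
  rw [← hg] at ht
  refine ⟨(g ^ (orderOf g / t) : Kˣ), IsPrimitiveRoot.coe_units_iff.mpr ?_⟩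
  convert IsPrimitiveRoot.orderOf (g ^ (orderOf g / t))
  exact (orderOf_pow_orderOf_div (orderOf_pos g).ne' ht).symm

section IsDomain

variable {R : Type*} [CommRing R] [IsDomain R]

theorem pow_degreeOf_eq_of_associated_scaleY {P : MvPolynomial (Fin 2) R} (hP : evalY0 P ≠ 0)
    {g h : R} (hgh : Associated (scaleY g P) (scaleY h P)) :
    g ^ degreeOf 1 P = h ^ degreeOf 1 P := by
  obtain ⟨u, hu⟩ := hgh
  obtain ⟨c, -, hc⟩ := isUnit_iff_eq_C_of_isReduced.mp u.isUnit
  rw [hc] at hu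
  have hc1 : c = 1 := by
    have heval := congrArg (evalY0AlgHom R) hu
    simp only [map_mul, evalY0AlgHom_apply, evalY0_scaleY] at heval
    rw [show evalY0 (C c) = Polynomial.C c from aeval_C _ _] at heval
    refine Polynomial.C_injective ?_
    rw [Polynomial.C_1]
    exact mul_left_cancel₀ hP (heval.trans (mul_one _).symm)
  have hP0 : P ≠ 0 := fun h => hP (by rw [h, ← evalY0AlgHom_apply, map_zero])
  obtain ⟨s, hs, hs1⟩ := exists_coeff_ne_zero_degreeOf hP0 (1 : Fin 2)
  have hcoeff := congrArg (coeff s) hu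
  rw [hc1, C_1, mul_one, coeff_scaleY, coeff_scaleY, hs1] at hcoeff
  exact mul_right_cancel₀ hs hcoeff

theorem eq_of_associated_scaleY_pow {ζ : R} {t : ℕ} (hζ : IsPrimitiveRoot ζ t)
    {P : MvPolynomial (Fin 2) R} (hP : evalY0 P ≠ 0) {i j : ℕ} (hi : i < t / degreeOf 1 P)
    (hj : j < t / degreeOf 1 P) (hij : Associated (scaleY (ζ ^ i) P) (scaleY (ζ ^ j) P)) :
    i = j := by
  set n := degreeOf 1 P
  have hn : 0 < n := Nat.pos_of_ne_zero fun h => by simp [h] at hi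
  have hlt : ∀ {l}, l < t / n → l * n < t := fun hl =>
    (Nat.mul_lt_mul_of_pos_right hl hn).trans_le (Nat.div_mul_le_self t n)
  have hpow : ζ ^ (i * n) = ζ ^ (j * n) := by
    simpa only [pow_mul] using pow_degreeOf_eq_of_associated_scaleY hP hij
  exact Nat.eq_of_mul_eq_mul_right hn (hζ.pow_inj (hlt hi) (hlt hj) hpow)

theorem evalY0_pow_dvd_evalY0_of_dvd_subYt [UniqueFactorizationMonoid R] {ζ : R} {t : ℕ}
    (hζ : IsPrimitiveRoot ζ t) {P Q : MvPolynomial (Fin 2) R} (hP : Irreducible P) (hPQ : P ∣ subYt t Q) :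
    evalY0 P ^ (t / degreeOf 1 P) ∣ evalY0 Q := by
  rcases Nat.eq_zero_or_pos t with rfl | ht
  · rw [Nat.zero_div, pow_zero]
    exact one_dvd _
  have hevalY0 : evalY0 P ∣ evalY0 Q := by
    simpa only [evalY0AlgHom_apply, evalY0_subYt ht.ne'] using map_dvd (evalY0AlgHom R) hPQ
  by_cases hP0 : evalY0 P = 0
  · rw [hP0, zero_dvd_iff] at hevalY0
    exact hevalY0 ▸ dvd_zero _
  have hprod : (∏ i ∈ Finset.range (t / degreeOf 1 P), scaleY (ζ ^ i) P) ∣ subYt t Q := by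
    refine Finset.prod_dvd_of_isRelPrime (fun i hi j hj hij => ?_) fun i _ => ?_
    · have hirr : ∀ l : ℕ, Irreducible (scaleY (ζ ^ l) P) := fun l =>
        irreducible_scaleY ((hζ.isUnit ht.ne').pow l) hP
      exact (hirr i).isRelPrime_of_not_associated (hirr j)
        fun h => hij (eq_of_associated_scaleY_pow hζ hP0 (Finset.mem_range.1 hi)
          (Finset.mem_range.1 hj) h)
    · have hroot : (ζ ^ i) ^ t = 1 := by rw [pow_right_comm, hζ.pow_eq_one, one_pow]
      simpa only [scaleY_subYt hroot] using map_dvd (scaleY (ζ ^ i)) hPQ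
  calc evalY0 P ^ (t / degreeOf 1 P)
      = evalY0AlgHom R (∏ i ∈ Finset.range (t / degreeOf 1 P), scaleY (ζ ^ i) P) := by
        simp only [map_prod, evalY0AlgHom_apply, evalY0_scaleY, Finset.prod_const,
          Finset.card_range]
    _ ∣ evalY0AlgHom R (subYt t Q) := map_dvd _ hprod
    _ = evalY0 Q := evalY0_subYt ht.ne' Q

end IsDomain

theorem stmt1_general (p : ℕ) [Fact p.Prime] (n t : ℕ)
    (hdvd : t ∣ p - 1)
    (P Q : MvPolynomial (Fin 2) (ZMod p))
    (hPirr : Irreducible P) (hPy : degreeOf 1 P = n)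
    (hPQ : P ∣ subYt t Q) :
    (evalY0 P) ^ (t / n) ∣ evalY0 Q := by
  have hcard : t ∣ Fintype.card (ZMod p) - 1 := by rw [ZMod.card]; exact hdvd
  obtain ⟨ζ, hζ⟩ := FiniteField.exists_isPrimitiveRoot_of_dvd hcard
  subst hPy
  exact evalY0_pow_dvd_evalY0_of_dvd_subYt hζ hPirr hPQ

/-- If `P(x,y)` is irreducible of bidegree `(m,n)`, `t ∣ p − 1`, and
`P(x,y) ∣ Q(x,y^t)`, then `P(x,0)^{⌊t/n⌋} ∣ Q(x,0)` in `F_p[x]`. -/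
theorem stmt1 (p : ℕ) [Fact p.Prime] (m n t : ℕ) (hn : 1 ≤ n) (ht : 0 < t)
    (hdvd : t ∣ p - 1)
    (P Q : MvPolynomial (Fin 2) (ZMod p))
    (hPirr : Irreducible P) (hPx : degreeOf 0 P = m) (hPy : degreeOf 1 P = n)
    (hPQ : P ∣ subYt t Q) :
    (evalY0 P) ^ (t / n) ∣ evalY0 Q :=
  stmt1_general p n t hdvd P Q hPirr hPy hPQ
end

section
/- Define polynomials q_k, r_k ∈ F_p[x,y] by q_1 = −∂P/∂x, r_1 = ∂P/∂y, and q_{k+1} = (∂q_k/∂x)(∂P/∂y)^2 − (∂q_k/∂y)(∂P/∂x)(∂P/∂y) − (2k−1)q_k(∂²P/∂x∂y)(∂P/∂y) + (2k−1)q_k(∂²P/∂y²)(∂P/∂x), r_{k+1} = r_k·(∂P/∂y)^2. Then for all k ≥ 1: deg_x q_k ≤ (2k−1)m − k, deg_y q_k ≤ (2k−1)n − k + 1, deg_x r_k ≤ (2k−1)m, and deg_y r_k ≤ (2k−1)(n−1). -/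
/-!
Every term of `q_{k+1}` is `q_k` times two partial derivatives of `P`, with one `∂/∂x` and two
`∂/∂y` distributed among the three factors. As `degreeOf` is subadditive on products and drops by
one under the partial derivative in its own variable, a step raises `deg_x` by at most `2m - 1` and
`deg_y` by at most `2n - 1`, while `r_{k+1} = r_k (∂P/∂y)^2` raises them by at most `2m` and
`2(n - 1)`. The bounds follow by induction on `k`.
-/

open MvPolynomial

namespace MvPolynomial

variable {σ R : Type*}

section CommSemiring

variable [CommSemiring R]

theorem add_single_mem_support_of_mem_support_pderiv {i : σ} {f : MvPolynomial σ R}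
    {s : σ →₀ ℕ} (hs : s ∈ (pderiv i f).support) : s + Finsupp.single i 1 ∈ f.support := by
  rw [mem_support_iff, coeff_pderiv] at hs
  exact mem_support_iff.mpr (left_ne_zero_of_mul hs)

theorem degreeOf_pderiv_le (i j : σ) (f : MvPolynomial σ R) :
    degreeOf j (pderiv i f) ≤ degreeOf j f :=
  degreeOf_le_iff.mpr fun _ hs =>
    (le_add_right le_rfl).trans
      (monomial_le_degreeOf j (add_single_mem_support_of_mem_support_pderiv hs))

theorem add_one_le_degreeOf_of_mem_support_pderiv {i : σ} {f : MvPolynomial σ R}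
    {s : σ →₀ ℕ} (hs : s ∈ (pderiv i f).support) : s i + 1 ≤ degreeOf i f := by
  simpa using monomial_le_degreeOf i (add_single_mem_support_of_mem_support_pderiv hs)

theorem degreeOf_pderiv_self_le (i : σ) (f : MvPolynomial σ R) :
    degreeOf i (pderiv i f) ≤ degreeOf i f - 1 :=
  degreeOf_le_iff.mpr fun _ hs =>
    Nat.le_sub_one_of_lt (add_one_le_degreeOf_of_mem_support_pderiv hs)

theorem degreeOf_pderiv_self_mul_le (i : σ) (f g : MvPolynomial σ R) :
    degreeOf i (pderiv i f * g) ≤ degreeOf i f + degreeOf i g - 1 := by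
  obtain hf | ⟨s, hs⟩ := (pderiv i f).support.eq_empty_or_nonempty
  · simp [support_eq_empty.mp hf]
  · have hpos := add_one_le_degreeOf_of_mem_support_pderiv hs
    have hle := degreeOf_pderiv_self_le i f
    have hmul := degreeOf_mul_le i (pderiv i f) g
    omega

theorem degreeOf_smul_le (i : σ) (c : R) (f : MvPolynomial σ R) :
    degreeOf i (c • f) ≤ degreeOf i f := by
  rw [smul_eq_C_mul]
  exact degreeOf_C_mul_le f i c

theorem degreeOf_mul_mul_le (i : σ) (f g h : MvPolynomial σ R) :
    degreeOf i (f * g * h) ≤ degreeOf i f + degreeOf i g + degreeOf i h :=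
  (degreeOf_mul_le _ _ _).trans (Nat.add_le_add_right (degreeOf_mul_le _ _ _) _)

end CommSemiring

section CommRing

variable [CommRing R]

theorem degreeOf_sub_sub_add_le (i : σ) {A B C D : MvPolynomial σ R} {t : ℕ}
    (hA : degreeOf i A ≤ t) (hB : degreeOf i B ≤ t) (hC : degreeOf i C ≤ t)
    (hD : degreeOf i D ≤ t) : degreeOf i (A - B - C + D) ≤ t :=
  (degreeOf_add_le _ _ _).trans <| max_le ((degreeOf_sub_le _ _ _).trans <|
    max_le ((degreeOf_sub_le _ _ _).trans (max_le hA hB)) hC) hD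

/-- If `Q / (∂P/∂y)^(2k-1)` is `d^k y/dx^k` on the curve `P(x, y) = 0`, then with `c = 2k - 1` this
is the numerator of `d^(k+1) y/dx^(k+1)` over `(∂P/∂y)^(2k+1)`. -/
noncomputable def implicitDerivNumStep (x y : σ) (P Q : MvPolynomial σ R) (c : R) :
    MvPolynomial σ R :=
  pderiv x Q * pderiv y P ^ 2 - pderiv y Q * pderiv x P * pderiv y P
    - c • (Q * pderiv y (pderiv x P) * pderiv y P)
    + c • (Q * pderiv y (pderiv y P) * pderiv x P)

variable (x y : σ) {P Q : MvPolynomial σ R} (c : R)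

theorem degreeOf_x_implicitDerivNumStep_le {m d : ℕ} (hm : 1 ≤ m)
    (hP : degreeOf x P ≤ m) (hQ : degreeOf x Q ≤ d) :
    degreeOf x (implicitDerivNumStep x y P Q c) ≤ d + 2 * m - 1 := by
  have hPx := degreeOf_pderiv_self_le x P
  have hPy := degreeOf_pderiv_le y x P
  have hPxy := degreeOf_pderiv_le y x (pderiv x P)
  have hPyy := degreeOf_pderiv_le y x (pderiv y P)
  have hQy := degreeOf_pderiv_le y x Q
  have hPy2 := degreeOf_pow_le x (pderiv y P) 2
  refine degreeOf_sub_sub_add_le x ?_ ?_ ?_ ?_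
  · exact (degreeOf_pderiv_self_mul_le x Q _).trans (by omega)
  · exact (degreeOf_mul_mul_le x _ _ _).trans (by omega)
  · exact (degreeOf_smul_le x c _).trans <| (degreeOf_mul_mul_le x _ _ _).trans (by omega)
  · exact (degreeOf_smul_le x c _).trans <| (degreeOf_mul_mul_le x _ _ _).trans (by omega)

theorem degreeOf_y_implicitDerivNumStep_le {n e : ℕ} (hn : 1 ≤ n)
    (hP : degreeOf y P ≤ n) (hQ : degreeOf y Q ≤ e) :
    degreeOf y (implicitDerivNumStep x y P Q c) ≤ e + 2 * n - 1 := by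
  have hPx := degreeOf_pderiv_le x y P
  have hPy := degreeOf_pderiv_self_le y P
  have hPxy := degreeOf_pderiv_self_le y (pderiv x P)
  have hPyy := degreeOf_pderiv_self_le y (pderiv y P)
  have hQx := degreeOf_pderiv_le x y Q
  have hQy := degreeOf_pderiv_self_le y Q
  have hPy2 := degreeOf_pow_le y (pderiv y P) 2
  refine degreeOf_sub_sub_add_le y ?_ ?_ ?_ ?_
  · exact (degreeOf_mul_le y _ _).trans (by omega)
  · exact (degreeOf_mul_mul_le y _ _ _).trans (by omega)
  · exact (degreeOf_smul_le y c _).trans <| (degreeOf_mul_mul_le y _ _ _).trans (by omega)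
  · exact (degreeOf_smul_le y c _).trans <| (degreeOf_mul_mul_le y _ _ _).trans (by omega)

theorem degreeOf_mul_pderiv_sq_le (i : σ) (f : MvPolynomial σ R) :
    degreeOf i (f * pderiv y P ^ 2) ≤ degreeOf i f + 2 * degreeOf i (pderiv y P) :=
  (degreeOf_mul_le _ _ _).trans (Nat.add_le_add_left (degreeOf_pow_le _ _ _) _)

end CommRing

end MvPolynomial

theorem two_mul_succ_sub_one_mul {k : ℕ} (hk : 1 ≤ k) (m : ℕ) :
    (2 * (k + 1) - 1) * m = (2 * k - 1) * m + 2 * m := by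
  rw [show 2 * (k + 1) - 1 = 2 * k - 1 + 2 by omega, add_mul]

theorem le_two_mul_sub_one_mul {k m : ℕ} (hm : 1 ≤ m) : k ≤ (2 * k - 1) * m :=
  calc k ≤ 2 * k - 1 := by omega
    _ ≤ (2 * k - 1) * m := Nat.le_mul_of_pos_right _ hm

theorem stmt4_general (p : ℕ) (m n : ℕ) (hm : 1 ≤ m) (hn : 1 ≤ n)
    (P : MvPolynomial (Fin 2) (ZMod p))
    (hPx : degreeOf 0 P ≤ m) (hPy : degreeOf 1 P ≤ n)
    (q r : ℕ → MvPolynomial (Fin 2) (ZMod p))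
    (hq1 : q 1 = - pderiv 0 P) (hr1 : r 1 = pderiv 1 P)
    (hqrec : ∀ k, 1 ≤ k →
      q (k + 1) =
        pderiv 0 (q k) * (pderiv 1 P) ^ 2
        - pderiv 1 (q k) * pderiv 0 P * pderiv 1 P
        - ((2 * k - 1 : ℕ) : ZMod p) • (q k * pderiv 1 (pderiv 0 P) * pderiv 1 P)
        + ((2 * k - 1 : ℕ) : ZMod p) • (q k * pderiv 1 (pderiv 1 P) * pderiv 0 P))
    (hrrec : ∀ k, 1 ≤ k → r (k + 1) = r k * (pderiv 1 P) ^ 2) :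
    ∀ k, 1 ≤ k →
      degreeOf 0 (q k) ≤ (2 * k - 1) * m - k ∧
      degreeOf 1 (q k) ≤ (2 * k - 1) * n - k + 1 ∧
      degreeOf 0 (r k) ≤ (2 * k - 1) * m ∧
      degreeOf 1 (r k) ≤ (2 * k - 1) * (n - 1) := by
  have hstep : ∀ k, 1 ≤ k →
      q (k + 1) = implicitDerivNumStep 0 1 P (q k) ((2 * k - 1 : ℕ) : ZMod p) := hqrec
  have hPx0 := degreeOf_pderiv_self_le 0 P
  have hPx1 := degreeOf_pderiv_le 0 1 P
  have hPy0 := degreeOf_pderiv_le 1 0 P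
  have hPy1 := degreeOf_pderiv_self_le 1 P
  intro k hk
  induction k, hk using Nat.le_induction with
  | base =>
    rw [hq1, hr1, degreeOf_neg, degreeOf_neg]
    omega
  | succ k hk ih =>
    obtain ⟨ihqx, ihqy, ihrx, ihry⟩ := ih
    have hkm := le_two_mul_sub_one_mul (k := k) hm
    have hkn := le_two_mul_sub_one_mul (k := k) hn
    rw [hstep k hk, hrrec k hk, two_mul_succ_sub_one_mul hk, two_mul_succ_sub_one_mul hk,
      two_mul_succ_sub_one_mul hk]
    refine ⟨?_, ?_, ?_, ?_⟩
    · exact (degreeOf_x_implicitDerivNumStep_le 0 1 _ hm hPx ihqx).trans (by omega)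
    · exact (degreeOf_y_implicitDerivNumStep_le 0 1 _ hn hPy ihqy).trans (by omega)
    · exact (degreeOf_mul_pderiv_sq_le 1 0 _).trans (by omega)
    · exact (degreeOf_mul_pderiv_sq_le 1 1 _).trans (by omega)

/-- Degree bounds for the recursively defined numerators `q_k` and
denominators `r_k` of the derivatives `d^k y/dx^k` along the curve `P(x,y)=0`. -/
theorem stmt4 (p : ℕ) [Fact p.Prime] (m n : ℕ) (hm : 1 ≤ m) (hn : 1 ≤ n)
    (P : MvPolynomial (Fin 2) (ZMod p))
    (hPx : degreeOf 0 P ≤ m) (hPy : degreeOf 1 P ≤ n)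
    (q r : ℕ → MvPolynomial (Fin 2) (ZMod p))
    (hq1 : q 1 = - pderiv 0 P) (hr1 : r 1 = pderiv 1 P)
    (hqrec : ∀ k, 1 ≤ k →
      q (k + 1) =
        pderiv 0 (q k) * (pderiv 1 P) ^ 2
        - pderiv 1 (q k) * pderiv 0 P * pderiv 1 P
        - ((2 * k - 1 : ℕ) : ZMod p) • (q k * pderiv 1 (pderiv 0 P) * pderiv 1 P)
        + ((2 * k - 1 : ℕ) : ZMod p) • (q k * pderiv 1 (pderiv 1 P) * pderiv 0 P))
    (hrrec : ∀ k, 1 ≤ k → r (k + 1) = r k * (pderiv 1 P) ^ 2) :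
    ∀ k, 1 ≤ k →
      degreeOf 0 (q k) ≤ (2 * k - 1) * m - k ∧
      degreeOf 1 (q k) ≤ (2 * k - 1) * n - k + 1 ∧
      degreeOf 0 (r k) ≤ (2 * k - 1) * m ∧
      degreeOf 1 (r k) ≤ (2 * k - 1) * (n - 1) :=
  stmt4_general p m n hm hn P hPx hPy q r hq1 hr1 hqrec hrrec
end

section
/- Let p be prime, t | p−1, and let D_k be the differential operator D_k = (∂P/∂y)^{2k−1} x^k y^k d^k/dx^k acting along the curve P(x,y)=0. Then for each monomial x^a x^{bt} y^{ct}, there is a polynomial R_{k,a,b,c}(x,y) with deg_x R_{k,a,b,c} ≤ 2(2k−1)m and deg_y R_{k,a,b,c} ≤ 2(2k−1)(2n−1)+1 such that D_k(x^{a+bt}y^{ct}) = R_{k,a,b,c}(x,y)·x^{a+bt}y^{ct} on the curve. -/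
open MvPolynomial

namespace Stmt17Aux

variable {σ : Type*} {R : Type*}

lemma dpd [CommSemiring R] (i j : σ) (f : MvPolynomial σ R) :
    degreeOf i (pderiv j f) ≤ degreeOf i f := by
  classical
  conv_lhs => rw [f.as_sum]
  rw [map_sum]
  refine (degreeOf_sum_le _ _ _).trans (Finset.sup_le fun s hs => ?_)
  rw [pderiv_monomial]
  refine le_trans ?_ (monomial_le_degreeOf i hs)
  by_cases h : (coeff s f * s j) = 0
  · simp [h]
  · rw [degreeOf_monomial_eq _ _ h]
    classical
    rw [Finsupp.tsub_apply]
    exact Nat.sub_le _ _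

lemma dmul [CommSemiring R] {i : σ} {f g : MvPolynomial σ R} {a b c : ℕ}
    (hf : degreeOf i f ≤ a) (hg : degreeOf i g ≤ b) (h : a + b ≤ c) :
    degreeOf i (f * g) ≤ c :=
  ((degreeOf_mul_le i f g).trans (add_le_add hf hg)).trans h

lemma dadd [CommSemiring R] {i : σ} {f g : MvPolynomial σ R} {c : ℕ}
    (hf : degreeOf i f ≤ c) (hg : degreeOf i g ≤ c) :
    degreeOf i (f + g) ≤ c :=
  (degreeOf_add_le i f g).trans (max_le hf hg)

lemma dsub [CommRing R] {i : σ} {f g : MvPolynomial σ R} {c : ℕ}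
    (hf : degreeOf i f ≤ c) (hg : degreeOf i g ≤ c) :
    degreeOf i (f - g) ≤ c :=
  (degreeOf_sub_le i f g).trans (max_le hf hg)

lemma dX [CommSemiring R] [Nontrivial R] [DecidableEq σ] (i j : σ) :
    degreeOf i (X j : MvPolynomial σ R) ≤ 1 := by
  rw [degreeOf_X]; split <;> omega

end Stmt17Aux

open Stmt17Aux

/-- Lemma 4 of the paper: along the curve `P(x,y)=0` (bidegree `(m,n)`),
the operator `D_k = (∂P/∂y)^{2k−1}·x^k·y^k·d^k/dx^k` sends the monomial `x^{a+bt}·y^{ct}`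
to `R_{k,a,b,c}·x^{a+bt}·y^{ct}` with `deg_x R ≤ 2(2k−1)m` and `deg_y R ≤ 2(2k−1)(2n−1)+1`.

Here the derivative along the curve is encoded by the tangential derivation
`Dop f = (∂P/∂y)(∂f/∂x) − (∂P/∂x)(∂f/∂y)`, so that `d^k f/dx^k = E_k/(∂P/∂y)^{2k−1}`
where `E_1 = Dop f` and `E_{k+1} = (∂P/∂y)·Dop(E_k) − (2k−1)·E_k·Dop(∂P/∂y)`; thus
`D_k(x^{a+bt}y^{ct}) = x^k·y^k·E_k`. -/
theorem stmt17 (p : ℕ) [Fact p.Prime] (m n t : ℕ) (hm : 1 ≤ m) (hn : 1 ≤ n)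
    (ht : 0 < t) (hdvd : t ∣ p - 1)
    (P : MvPolynomial (Fin 2) (ZMod p))
    (hPx : degreeOf 0 P ≤ m) (hPy : degreeOf 1 P ≤ n)
    (a b c : ℕ)
    (Dop : MvPolynomial (Fin 2) (ZMod p) → MvPolynomial (Fin 2) (ZMod p))
    (hDop : ∀ f, Dop f = pderiv 1 P * pderiv 0 f - pderiv 0 P * pderiv 1 f)
    (E : ℕ → MvPolynomial (Fin 2) (ZMod p))
    (hE1 : E 1 = Dop (X 0 ^ (a + b * t) * X 1 ^ (c * t)))
    (hErec : ∀ k, 1 ≤ k → E (k + 1) =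
      pderiv 1 P * Dop (E k) - ((2 * k - 1 : ℕ) : ZMod p) • (E k * Dop (pderiv 1 P))) :
    ∀ k, 1 ≤ k → ∃ R : MvPolynomial (Fin 2) (ZMod p),
      degreeOf 0 R ≤ 2 * (2 * k - 1) * m ∧
      degreeOf 1 R ≤ 2 * (2 * k - 1) * (2 * n - 1) + 1 ∧
      X 0 ^ k * X 1 ^ k * E k = R * (X 0 ^ (a + b * t) * X 1 ^ (c * t)) := by
  classical
  haveI : Fact (1 < p) := ⟨(Fact.out : p.Prime).one_lt⟩
  -- derivative of pure powers
  have key : ∀ (i : Fin 2) (A : ℕ),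
      X i * pderiv i (X i ^ A) = C (A : ZMod p) * X i ^ A := by
    intro i A
    cases A with
    | zero => simp
    | succ A =>
        rw [pderiv_pow, pderiv_X_self, mul_one, Nat.add_sub_cancel,
          ← map_natCast (C : ZMod p →+* MvPolynomial (Fin 2) (ZMod p))]
        ring
  have pd0 : ∀ (i j : Fin 2) (A : ℕ), i ≠ j →
      pderiv i (X j ^ A : MvPolynomial (Fin 2) (ZMod p)) = 0 := by
    intro i j A h
    rw [pderiv_pow, pderiv_X_of_ne h.symm, mul_zero]
  have hDmul : ∀ f g, Dop (f * g) = Dop f * g + f * Dop g := by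
    intro f g
    simp only [hDop, pderiv_mul]
    ring
  have lemXY : ∀ (A B : ℕ), X 0 * X 1 * Dop (X 0 ^ A * X 1 ^ B) =
      (C (A : ZMod p) * (pderiv 1 P * X 1) - C (B : ZMod p) * (pderiv 0 P * X 0)) *
        (X 0 ^ A * X 1 ^ B) := by
    intro A B
    rw [hDop, pderiv_mul, pderiv_mul, pd0 0 1 B (by decide), pd0 1 0 A (by decide)]
    linear_combination (pderiv 1 P * X 1 * X 1 ^ B) * key 0 A
      - (pderiv 0 P * X 0 * X 0 ^ A) * key 1 B
  -- generic degree bound for the step expression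
  have dR' : ∀ (i : Fin 2) (Rk : MvPolynomial (Fin 2) (ZMod p)) (d e : ℕ)
      (c1 c2 c3 c4 : ZMod p), 1 ≤ d → degreeOf i P ≤ d → degreeOf i Rk ≤ e →
      degreeOf i (pderiv 1 P * (X 0 * X 1 * Dop Rk
          + Rk * (C c1 * (pderiv 1 P * X 1) - C c2 * (pderiv 0 P * X 0))
          - (C c3 * (pderiv 1 P * X 1) - C c3 * (pderiv 0 P * X 0)) * Rk)
        - C c4 * (X 0 * X 1 * Dop (pderiv 1 P) * Rk)) ≤ e + 4 * d := by
    intro i Rk d e c1 c2 c3 c4 hd hP hR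
    have hPy' : degreeOf i (pderiv 1 P) ≤ d := (dpd i 1 P).trans hP
    have hPx' : degreeOf i (pderiv 0 P) ≤ d := (dpd i 0 P).trans hP
    have hC : ∀ r : ZMod p, degreeOf i (C r : MvPolynomial (Fin 2) (ZMod p)) ≤ 0 :=
      fun r => le_of_eq (degreeOf_C r i)
    rw [hDop, hDop]
    have hDR : degreeOf i (pderiv 1 P * pderiv 0 Rk - pderiv 0 P * pderiv 1 Rk)
        ≤ d + e := dsub (dmul hPy' ((dpd i 0 Rk).trans hR) le_rfl)
      (dmul hPx' ((dpd i 1 Rk).trans hR) le_rfl)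
    have hDP : degreeOf i (pderiv 1 P * pderiv 0 (pderiv 1 P)
        - pderiv 0 P * pderiv 1 (pderiv 1 P)) ≤ 2 * d :=
      dsub (dmul hPy' ((dpd i 0 _).trans hPy') (by omega))
        (dmul hPx' ((dpd i 1 _).trans hPy') (by omega))
    have hS : degreeOf i (C c1 * (pderiv 1 P * X 1) - C c2 * (pderiv 0 P * X 0))
        ≤ d + 1 := dsub (dmul (hC c1) (dmul hPy' (dX i 1) le_rfl) (by omega))
      (dmul (hC c2) (dmul hPx' (dX i 0) le_rfl) (by omega))
    have hT : degreeOf i (C c3 * (pderiv 1 P * X 1) - C c3 * (pderiv 0 P * X 0))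
        ≤ d + 1 := dsub (dmul (hC c3) (dmul hPy' (dX i 1) le_rfl) (by omega))
      (dmul (hC c3) (dmul hPx' (dX i 0) le_rfl) (by omega))
    refine le_trans (dsub (c := 2 * d + e + 2)
      (dmul (b := d + e + 2) hPy' ?_ (by omega)) ?_) (by omega)
    · exact dsub (c := d + e + 2)
        (dadd (dmul (dmul (dX i 0) (dX i 1) le_rfl) hDR (by omega))
          (dmul hR hS (by omega)))
        (dmul hT hR (by omega))
    · exact dmul (hC c4)
        (dmul (c := 2 * d + e + 2)
          (dmul (dmul (dX i 0) (dX i 1) le_rfl) hDP le_rfl) hR (by omega))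
        (by omega)
  intro k hk
  induction k, hk using Nat.le_induction with
  | base =>
      refine ⟨C ((a + b * t : ℕ) : ZMod p) * (pderiv 1 P * X 1)
        - C ((c * t : ℕ) : ZMod p) * (pderiv 0 P * X 0), ?_, ?_, ?_⟩
      · refine le_trans (dsub (c := m + 1)
          (dmul (le_of_eq (degreeOf_C _ _))
            (dmul ((dpd 0 1 P).trans hPx) (dX 0 1) le_rfl) (by omega))
          (dmul (le_of_eq (degreeOf_C _ _))
            (dmul ((dpd 0 0 P).trans hPx) (dX 0 0) le_rfl) (by omega))) (by omega)
      · refine le_trans (dsub (c := n + 1)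
          (dmul (le_of_eq (degreeOf_C _ _))
            (dmul ((dpd 1 1 P).trans hPy) (dX 1 1) le_rfl) (by omega))
          (dmul (le_of_eq (degreeOf_C _ _))
            (dmul ((dpd 1 0 P).trans hPy) (dX 1 0) le_rfl) (by omega))) (by omega)
      · rw [hE1]
        linear_combination lemXY (a + b * t) (c * t)
  | succ k hk IH =>
      obtain ⟨Rk, hRx, hRy, hEq⟩ := IH
      have hd : Dop (X 0 ^ k * X 1 ^ k) * E k + X 0 ^ k * X 1 ^ k * Dop (E k)
          = Dop Rk * (X 0 ^ (a + b * t) * X 1 ^ (c * t))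
            + Rk * Dop (X 0 ^ (a + b * t) * X 1 ^ (c * t)) := by
        rw [← hDmul, ← hDmul, hEq]
      refine ⟨pderiv 1 P * (X 0 * X 1 * Dop Rk
          + Rk * (C ((a + b * t : ℕ) : ZMod p) * (pderiv 1 P * X 1)
            - C ((c * t : ℕ) : ZMod p) * (pderiv 0 P * X 0))
          - (C ((k : ℕ) : ZMod p) * (pderiv 1 P * X 1)
            - C ((k : ℕ) : ZMod p) * (pderiv 0 P * X 0)) * Rk)
        - C ((2 * k - 1 : ℕ) : ZMod p) * (X 0 * X 1 * Dop (pderiv 1 P) * Rk), ?_, ?_, ?_⟩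
      · refine (dR' 0 Rk m (2 * (2 * k - 1) * m) _ _ _ _ hm hPx hRx).trans ?_
        rw [show 2 * (2 * (k + 1) - 1) = 2 * (2 * k - 1) + 4 from by omega, add_mul]
      · refine (dR' 1 Rk n (2 * (2 * k - 1) * (2 * n - 1) + 1) _ _ _ _ hn hPy hRy).trans ?_
        rw [show 2 * (2 * (k + 1) - 1) = 2 * (2 * k - 1) + 4 from by omega, add_mul]
        generalize 2 * (2 * k - 1) * (2 * n - 1) = w
        omega
      · rw [hErec k hk, smul_eq_C_mul]
        linear_combination (pderiv 1 P * (X 0 * X 1)) * hd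
          - (pderiv 1 P * E k) * lemXY k k
          + (pderiv 1 P * Rk) * lemXY (a + b * t) (c * t)
          - (pderiv 1 P * (C ((k : ℕ) : ZMod p) * (pderiv 1 P * X 1)
              - C ((k : ℕ) : ZMod p) * (pderiv 0 P * X 0))
            + C ((2 * k - 1 : ℕ) : ZMod p) * (X 0 * X 1 * Dop (pderiv 1 P))) * hEq
end
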